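/- Let υ(t) = tυ' + μ mod ℤ³ with υ' ∈ ℤ³, k ∈ ℤ³ with ⟨k,υ'⟩ = 0, and v a unit vector in ℝ³. Then the line integral of *d(√2·cos(2π⟨k,x⟩)·v*) along υ equals −2√2·π·det(v, υ', k)·sin(2π⟨μ,k⟩). -/
import Mathlib


open Real MeasureTheory intervalIntegral

/-- For `υ(t) = tυ' + μ mod ℤ³` with `⟨k,υ'⟩ = 0`, the line integral of
`*d(√2·cos(2π⟨k,x⟩)·v*) = −2√2π·sin(2π⟨k,x⟩)·(k×v)*` along `υ` equals
`−2√2π·det(v,υ',k)·sin(2π⟨μ,k⟩)`. -/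
theorem stmt_13 (υ' : Fin 3 → ℤ) (μ : Fin 3 → ℝ) (k : Fin 3 → ℤ)
    (hk : (∑ i, k i * υ' i) = 0) (v : Fin 3 → ℝ) (hv : ∑ j, v j ^ 2 = 1) :
    (∫ t in (0:ℝ)..1,
      (-2 * Real.sqrt 2 * π *
          Real.sin (2 * π * ∑ i, (k i : ℝ) * (t * (υ' i : ℝ) + μ i))) *
        (∑ i, (crossProduct (fun j => (k j : ℝ)) v) i * (υ' i : ℝ)))
    = -2 * Real.sqrt 2 * π *
        Matrix.det (Matrix.of ![v, fun i => ((υ' i : ℝ)), fun i => ((k i : ℝ))]) *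
        Real.sin (2 * π * ∑ i, μ i * (k i : ℝ)) := by
  have hk' : (∑ i, (k i : ℝ) * (υ' i : ℝ)) = 0 := by
    exact_mod_cast congrArg (Int.cast : ℤ → ℝ) hk
  have hphase : ∀ t : ℝ, (∑ i, (k i : ℝ) * (t * (υ' i : ℝ) + μ i))
      = ∑ i, μ i * (k i : ℝ) := by
    intro t
    have : (∑ i, (k i : ℝ) * (t * (υ' i : ℝ) + μ i))
        = t * (∑ i, (k i : ℝ) * (υ' i : ℝ)) + ∑ i, μ i * (k i : ℝ) := by
      rw [Finset.mul_sum, ← Finset.sum_add_distrib]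
      exact Finset.sum_congr rfl fun i _ => by ring
    rw [this, hk', mul_zero, zero_add]
  have hconst : (∫ t in (0:ℝ)..1,
      (-2 * Real.sqrt 2 * π *
          Real.sin (2 * π * ∑ i, (k i : ℝ) * (t * (υ' i : ℝ) + μ i))) *
        (∑ i, (crossProduct (fun j => (k j : ℝ)) v) i * (υ' i : ℝ)))
      = (-2 * Real.sqrt 2 * π * Real.sin (2 * π * ∑ i, μ i * (k i : ℝ))) *
        (∑ i, (crossProduct (fun j => (k j : ℝ)) v) i * (υ' i : ℝ)) := by
    have : ∀ t : ℝ,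
        (-2 * Real.sqrt 2 * π *
          Real.sin (2 * π * ∑ i, (k i : ℝ) * (t * (υ' i : ℝ) + μ i))) *
        (∑ i, (crossProduct (fun j => (k j : ℝ)) v) i * (υ' i : ℝ))
        = (-2 * Real.sqrt 2 * π * Real.sin (2 * π * ∑ i, μ i * (k i : ℝ))) *
        (∑ i, (crossProduct (fun j => (k j : ℝ)) v) i * (υ' i : ℝ)) := by
      intro t; rw [hphase t]
    rw [intervalIntegral.integral_congr (fun t _ => this t),
      intervalIntegral.integral_const]
    simp
  rw [hconst]
  have hdet : (∑ i, (crossProduct (fun j => (k j : ℝ)) v) i * (υ' i : ℝ))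
      = Matrix.det (Matrix.of ![v, fun i => ((υ' i : ℝ)), fun i => ((k i : ℝ))]) := by
    rw [Matrix.det_fin_three]
    simp [crossProduct, Fin.sum_univ_three, Matrix.of_apply]
    ring
  rw [hdet]; ring
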